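/- arXiv:1706.01693 — 12 statements merged into one kernel-verified Lean document; each statement's English description precedes it below -/
import Mathlib

section
/- The biquadratic function Z(s) = (a₂s² + a₁s + a₀)/(b₂s² + b₁s + b₀) with nonnegative coefficients a₂,a₁,a₀,b₂,b₁,b₀ ≥ 0 (and denominator not identically zero) is positive-real if and only if (√(a₀b₂) − √(a₂b₀))² ≤ a₁b₁. -/
/-!
Writing `Z = P / Q`, the sign of `Re Z` is that of `Re (P · conj Q)`, and for `s = x + iy` this
equals `x · R(x, y) + q(y²)` with `R ≥ 0` for `x ≥ 0` and
`q(t) = a₂b₂ t² + (a₁b₁ - a₀b₂ - a₂b₀) t + a₀b₀`. Hence `Z` is positive-real iff `q ≥ 0` on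
`[0, ∞)` (the imaginary axis lies in the closure of the right half-plane), and for a quadratic
with nonnegative outer coefficients this is the discriminant-type condition
`-2√(a₂b₂a₀b₀) ≤ a₁b₁ - a₀b₂ - a₂b₀`, i.e. `(√(a₀b₂) - √(a₂b₀))² ≤ a₁b₁`.
-/

/-- A real-rational function (as a map ℂ → ℂ) is positive-real if it is analytic
and has nonnegative real part on the open right half-plane. -/
def IsPositiveReal (H : ℂ → ℂ) : Prop :=
  DifferentiableOn ℂ H {s : ℂ | 0 < s.re} ∧ ∀ s : ℂ, 0 < s.re → 0 ≤ (H s).re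

open Complex ComplexConjugate

lemma quadratic_nonneg_on_nonneg_iff {A B C : ℝ} (hA : 0 ≤ A) (hC : 0 ≤ C) :
    (∀ t : ℝ, 0 ≤ t → 0 ≤ A * t ^ 2 + B * t + C) ↔ -(2 * √(A * C)) ≤ B := by
  rw [Real.sqrt_mul hA]
  constructor
  · intro h
    by_contra! hB
    have hB' : 0 < -B := by linarith [mul_nonneg (Real.sqrt_nonneg A) (Real.sqrt_nonneg C)]
    rcases hA.eq_or_lt with rfl | hA
    · have := h ((C + 1) / -B) (by positivity)
      have hBt : B * ((C + 1) / -B) = -(C + 1) := by field_simp [(neg_pos.1 hB').ne]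
      linarith
    · -- the value at the vertex `-B / (2A)` is `C - B² / (4A) < 0`
      have hB2 : 4 * A * C < B ^ 2 := by
        have := Real.sq_sqrt hA.le
        have := Real.sq_sqrt hC
        nlinarith [mul_nonneg (Real.sqrt_nonneg A) (Real.sqrt_nonneg C)]
      have := h (-B / (2 * A)) (by positivity)
      field_simp at this
      nlinarith
  · intro hB t ht
    have hsq : A * t ^ 2 + B * t + C = (√A * t - √C) ^ 2 + (B + 2 * (√A * √C)) * t := by
      rw [sub_sq, mul_pow, Real.sq_sqrt hA, Real.sq_sqrt hC]; ring
    have : 0 ≤ B + 2 * (√A * √C) := by linarith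
    rw [hsq]
    positivity

lemma sqrt_sub_sqrt_sq_le_iff {u v c : ℝ} (hu : 0 ≤ u) (hv : 0 ≤ v) :
    (√u - √v) ^ 2 ≤ c ↔ -(2 * √(u * v)) ≤ c - (u + v) := by
  rw [sub_sq, Real.sq_sqrt hu, Real.sq_sqrt hv, Real.sqrt_mul hu]
  constructor <;> intro h <;> linarith

lemma nonneg_of_nonneg_on_re_pos {f : ℂ → ℝ} (hf : Continuous f)
    (h : ∀ s : ℂ, 0 < s.re → 0 ≤ f s) {s : ℂ} (hs : 0 ≤ s.re) : 0 ≤ f s := by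
  have hsub : closure {s : ℂ | 0 < s.re} ⊆ {s | 0 ≤ f s} :=
    closure_minimal h (isClosed_le continuous_const hf)
  exact hsub (by simpa using hs)

lemma re_div_nonneg_iff {z w : ℂ} (hw : w ≠ 0) : 0 ≤ (z / w).re ↔ 0 ≤ (z * conj w).re := by
  rw [div_re, ← add_div, le_div_iff₀ (normSq_pos.2 hw), zero_mul]
  simp

/-- `Re (Q(s) · conj s) = (b₂ Re s + b₁) |s|² + b₀ Re s`, which is positive. -/
lemma quadratic_ne_zero_of_re_pos {b₂ b₁ b₀ : ℝ} (hb₂ : 0 ≤ b₂) (hb₁ : 0 ≤ b₁) (hb₀ : 0 ≤ b₀)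
    (hb : ¬(b₂ = 0 ∧ b₁ = 0 ∧ b₀ = 0)) {s : ℂ} (hs : 0 < s.re) :
    (b₂ : ℂ) * s ^ 2 + b₁ * s + b₀ ≠ 0 := by
  intro h
  have h' := congrArg (fun z => (z * conj s).re) h
  have hn : 0 < s.re ^ 2 + s.im ^ 2 := by positivity
  simp only [add_mul, add_re, mul_re, pow_two, conj_re, conj_im, ofReal_re, ofReal_im,
    mul_im, zero_mul, sub_zero, zero_re] at h'
  refine hb ⟨?_, ?_, ?_⟩ <;>
    nlinarith [mul_nonneg hb₂ hs.le, mul_nonneg hb₁ hs.le, mul_nonneg hb₀ hs.le, mul_pos hs hn]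

lemma re_mul_conj_quadratic (a₂ a₁ a₀ b₂ b₁ b₀ : ℝ) (s : ℂ) :
    (((a₂ : ℂ) * s ^ 2 + a₁ * s + a₀) * conj ((b₂ : ℂ) * s ^ 2 + b₁ * s + b₀)).re =
      s.re * (a₂ * b₂ * s.re * (s.re ^ 2 + 2 * s.im ^ 2)
        + (a₂ * b₁ + a₁ * b₂) * (s.re ^ 2 + s.im ^ 2)
        + (a₀ * b₂ + a₂ * b₀ + a₁ * b₁) * s.re + (a₁ * b₀ + a₀ * b₁))
      + (a₂ * b₂ * (s.im ^ 2) ^ 2 + (a₁ * b₁ - (a₀ * b₂ + a₂ * b₀)) * s.im ^ 2 + a₀ * b₀) := by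
  simp only [pow_two, map_add, map_mul, conj_ofReal, mul_re, add_re, ofReal_re, ofReal_im, mul_im,
    zero_mul, sub_zero, conj_re, conj_im, mul_neg, neg_mul, neg_neg, neg_zero, add_im, add_zero]
  ring

theorem biquadratic_positive_real_iff
    (a₂ a₁ a₀ b₂ b₁ b₀ : ℝ)
    (ha₂ : 0 ≤ a₂) (ha₁ : 0 ≤ a₁) (ha₀ : 0 ≤ a₀)
    (hb₂ : 0 ≤ b₂) (hb₁ : 0 ≤ b₁) (hb₀ : 0 ≤ b₀)
    (hden : ¬(b₂ = 0 ∧ b₁ = 0 ∧ b₀ = 0)) :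
    IsPositiveReal (fun s : ℂ =>
        ((a₂ : ℂ) * s ^ 2 + (a₁ : ℂ) * s + (a₀ : ℂ)) /
        ((b₂ : ℂ) * s ^ 2 + (b₁ : ℂ) * s + (b₀ : ℂ))) ↔
      (Real.sqrt (a₀ * b₂) - Real.sqrt (a₂ * b₀)) ^ 2 ≤ a₁ * b₁ := by
  have hQ (s : ℂ) (hs : 0 < s.re) := quadratic_ne_zero_of_re_pos hb₂ hb₁ hb₀ hden hs
  rw [sqrt_sub_sqrt_sq_le_iff (mul_nonneg ha₀ hb₂) (mul_nonneg ha₂ hb₀),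
    show a₀ * b₂ * (a₂ * b₀) = a₂ * b₂ * (a₀ * b₀) by ring,
    ← quadratic_nonneg_on_nonneg_iff (mul_nonneg ha₂ hb₂) (mul_nonneg ha₀ hb₀)]
  constructor
  · rintro ⟨-, hZ⟩ t ht
    have hIm := nonneg_of_nonneg_on_re_pos (by fun_prop)
      (fun s hs => (re_div_nonneg_iff (hQ s hs)).1 (hZ s hs)) (s := I * √t) (by simp)
    rw [re_mul_conj_quadratic] at hIm
    simpa [Real.sq_sqrt ht] using hIm
  · intro hq
    refine ⟨DifferentiableOn.div (by fun_prop) (by fun_prop) hQ,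
      fun s hs => (re_div_nonneg_iff (hQ s hs)).2 ?_⟩
    rw [re_mul_conj_quadratic]
    exact add_nonneg (mul_nonneg hs.le (by positivity)) (hq _ (sq_nonneg s.im))
end

section
/- Let a₂,a₁,a₀,b₂,b₁,b₀ > 0 satisfy ℝ − 4a₀a₂b₀b₂ ≥ 0, where ℝ = (a₀b₁ − a₁b₀)(a₁b₂ − a₂b₁) − (a₀b₂ − a₂b₀)². Then Γ_a := ℝ + b₀b₂(a₁² − 4a₀a₂) ≥ a₁²b₀b₂ > 0, Γ_b := ℝ + a₀a₂(b₁² − 4b₀b₂) ≥ a₀a₂b₁² > 0, and 𝕄ℝ + 2a₀a₂b₀b₂(a₁b₁ − 2𝕄) ≥ 2a₀a₁a₂b₀b₁b₂ > 0, where 𝕄 = a₀b₂ + a₂b₀. -/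
theorem stmt3 (a₂ a₁ a₀ b₂ b₁ b₀ : ℝ)
    (ha₂ : 0 < a₂) (ha₁ : 0 < a₁) (ha₀ : 0 < a₀)
    (hb₂ : 0 < b₂) (hb₁ : 0 < b₁) (hb₀ : 0 < b₀)
    (R M : ℝ)
    (hR : R = (a₀ * b₁ - a₁ * b₀) * (a₁ * b₂ - a₂ * b₁) - (a₀ * b₂ - a₂ * b₀) ^ 2)
    (hM : M = a₀ * b₂ + a₂ * b₀)
    (hcond : 0 ≤ R - 4 * a₀ * a₂ * b₀ * b₂) :
    (a₁ ^ 2 * b₀ * b₂ ≤ R + b₀ * b₂ * (a₁ ^ 2 - 4 * a₀ * a₂) ∧ 0 < a₁ ^ 2 * b₀ * b₂) ∧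
    (a₀ * a₂ * b₁ ^ 2 ≤ R + a₀ * a₂ * (b₁ ^ 2 - 4 * b₀ * b₂) ∧ 0 < a₀ * a₂ * b₁ ^ 2) ∧
    (2 * a₀ * a₁ * a₂ * b₀ * b₁ * b₂ ≤ M * R + 2 * a₀ * a₂ * b₀ * b₂ * (a₁ * b₁ - 2 * M) ∧
      0 < 2 * a₀ * a₁ * a₂ * b₀ * b₁ * b₂) := by
  have hM0 : 0 < M := by rw [hM]; positivity
  refine ⟨⟨by nlinarith, by positivity⟩, ⟨by nlinarith, by positivity⟩,
    ⟨?_, by positivity⟩⟩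
  nlinarith [mul_nonneg hM0.le hcond]
end

section
/- Let U, V, W > 0 satisfy −4U² − 4V² + 4UV(W + W⁻¹) − (W − W⁻¹)² > 0. Then U > 1 and V > 1. -/
theorem stmt8 (U V W : ℝ) (hU : 0 < U) (hV : 0 < V) (hW : 0 < W)
    (h : 0 < -4 * U ^ 2 - 4 * V ^ 2 + 4 * U * V * (W + W⁻¹) - (W - W⁻¹) ^ 2) :
    1 < U ∧ 1 < V := by
  have hWne : W ≠ 0 := hW.ne'
  have hW2 : 0 < W ^ 2 := by positivity
  have hhW : 0 < (-4 * U ^ 2 - 4 * V ^ 2 + 4 * U * V * (W + W⁻¹) - (W - W⁻¹) ^ 2) * W ^ 2 :=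
    mul_pos h hW2
  have key : 0 < (V ^ 2 - 1) * (W ^ 2 - 1) ^ 2 - (2 * U * W - V * (W ^ 2 + 1)) ^ 2 := by
    have : (-4 * U ^ 2 - 4 * V ^ 2 + 4 * U * V * (W + W⁻¹) - (W - W⁻¹) ^ 2) * W ^ 2
        = (V ^ 2 - 1) * (W ^ 2 - 1) ^ 2 - (2 * U * W - V * (W ^ 2 + 1)) ^ 2 := by
      field_simp; ring
    linarith [this ▸ hhW]
  have key2 : 0 < (U ^ 2 - 1) * (W ^ 2 - 1) ^ 2 - (2 * V * W - U * (W ^ 2 + 1)) ^ 2 := by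
    have : (-4 * U ^ 2 - 4 * V ^ 2 + 4 * U * V * (W + W⁻¹) - (W - W⁻¹) ^ 2) * W ^ 2
        = (U ^ 2 - 1) * (W ^ 2 - 1) ^ 2 - (2 * V * W - U * (W ^ 2 + 1)) ^ 2 := by
      field_simp; ring
    linarith [this ▸ hhW]
  have hU2 : 0 < (U ^ 2 - 1) * (W ^ 2 - 1) ^ 2 := by
    nlinarith [sq_nonneg (2 * V * W - U * (W ^ 2 + 1))]
  have hV2 : 0 < (V ^ 2 - 1) * (W ^ 2 - 1) ^ 2 := by
    nlinarith [sq_nonneg (2 * U * W - V * (W ^ 2 + 1))]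
  have hU1 : 0 < U ^ 2 - 1 := by
    by_contra hc
    push_neg at hc
    nlinarith [sq_nonneg (W ^ 2 - 1)]
  have hV1 : 0 < V ^ 2 - 1 := by
    by_contra hc
    push_neg at hc
    nlinarith [sq_nonneg (W ^ 2 - 1)]
  constructor
  · nlinarith [hU1, hU]
  · nlinarith [hV1, hV]
end

section
/- Let U, V, W > 0 satisfy −4U² − 4V² + 4UV(W − 3W⁻¹) − (W − W⁻¹)(W − 9W⁻¹) ≥ 0 together with −4U² − 4V² + 4UV(W + W⁻¹) − (W − W⁻¹)² > 0. Then W ≥ 3, and if W = 3 then U = V. -/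
theorem stmt9 (U V W : ℝ) (hU : 0 < U) (hV : 0 < V) (hW : 0 < W)
    (h2 : 0 ≤ -4 * U ^ 2 - 4 * V ^ 2 + 4 * U * V * (W - 3 * W⁻¹)
            - (W - W⁻¹) * (W - 9 * W⁻¹))
    (h1 : 0 < -4 * U ^ 2 - 4 * V ^ 2 + 4 * U * V * (W + W⁻¹) - (W - W⁻¹) ^ 2) :
    3 ≤ W ∧ (W = 3 → U = V) := by
  have hWne : W ≠ 0 := ne_of_gt hW
  have h1' : 0 < -4*U^2*W^2 - 4*V^2*W^2 + 4*U*V*W*(W^2+1) - (W^2-1)^2 := by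
    have := mul_pos h1 (by positivity : (0:ℝ) < W^2)
    have e : (-4 * U ^ 2 - 4 * V ^ 2 + 4 * U * V * (W + W⁻¹) - (W - W⁻¹) ^ 2) * W^2
        = -4*U^2*W^2 - 4*V^2*W^2 + 4*U*V*W*(W^2+1) - (W^2-1)^2 := by
      field_simp
    linarith [e ▸ this]
  have h2' : 0 ≤ -4*U^2*W^2 - 4*V^2*W^2 + 4*U*V*W*(W^2-3) - (W^2-1)*(W^2-9) := by
    have := mul_nonneg h2 (by positivity : (0:ℝ) ≤ W^2)
    have e : (-4 * U ^ 2 - 4 * V ^ 2 + 4 * U * V * (W - 3 * W⁻¹)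
        - (W - W⁻¹) * (W - 9 * W⁻¹)) * W^2
        = -4*U^2*W^2 - 4*V^2*W^2 + 4*U*V*W*(W^2-3) - (W^2-1)*(W^2-9) := by
      field_simp
    linarith [e ▸ this]
  -- key1 : 4UVW > (W+1)^2
  have hw1 : (0:ℝ) ≤ (W-1)^2 := sq_nonneg _
  have hmul : ((W+1)^2) * (W-1)^2 < (4*U*V*W) * (W-1)^2 := by
    nlinarith [mul_nonneg (sq_nonneg (U-V)) (sq_nonneg W)]
  rcases eq_or_ne W 1 with h | h
  · exfalso
    subst h
    nlinarith [sq_nonneg (U-V)]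
  have hw1' : (0:ℝ) < (W-1)^2 := by
    have : W - 1 ≠ 0 := sub_ne_zero.mpr h
    positivity
  have key1 : (W+1)^2 < 4*U*V*W := lt_of_mul_lt_mul_right hmul hw1
  have hb : 0 < 4*U*V*W - (W-1)*(W+3) := by nlinarith [key1]
  have hprod : 4*W^2*(U-V)^2 ≤ (W-3)*((W+1)*(4*U*V*W - (W-1)*(W+3))) := by
    nlinarith [h2']
  have hW3 : 3 ≤ W := by
    by_contra hc
    push_neg at hc
    have hpos : 0 < (W+1)*(4*U*V*W - (W-1)*(W+3)) := mul_pos (by linarith) hb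
    have hneg : (W-3)*((W+1)*(4*U*V*W - (W-1)*(W+3))) < 0 :=
      mul_neg_of_neg_of_pos (by linarith) hpos
    have : (0:ℝ) ≤ 4*W^2*(U-V)^2 := by positivity
    linarith
  refine ⟨hW3, fun hw3 => ?_⟩
  subst hw3
  have h4 : (U-V)^2 ≤ 0 := by nlinarith [hprod]
  have h5 : (U-V)^2 = 0 := le_antisymm h4 (sq_nonneg _)
  have := pow_eq_zero_iff (n := 2) (by norm_num) |>.mp h5
  linarith [sub_eq_zero.mp this]
end

section
/- Let U, V, W > 0 with U > 1 satisfy conditions (i) −4U² − 4V² + 4UV(W + W⁻¹) − (W − W⁻¹)² > 0 and (ii) −4U² − 4V² + 4UV(W − 3W⁻¹) − (W − W⁻¹)(W − 9W⁻¹) ≥ 0. If 2UV ≤ W − W⁻¹, then −4U² − 4V² + 4UV(W − W⁻¹) − (W − W⁻¹)(W − 5W⁻¹) + 8V²W⁻² > 0 and −4V² + 4U² + 4UV(W − W⁻¹) − (W − W⁻¹)(W + 3W⁻¹) > 0. -/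
theorem stmt10 (U V W : ℝ) (hU : 0 < U) (hV : 0 < V) (hW : 0 < W) (hU1 : 1 < U)
    (h1 : 0 < -4 * U ^ 2 - 4 * V ^ 2 + 4 * U * V * (W + W⁻¹) - (W - W⁻¹) ^ 2)
    (h2 : 0 ≤ -4 * U ^ 2 - 4 * V ^ 2 + 4 * U * V * (W - 3 * W⁻¹)
            - (W - W⁻¹) * (W - 9 * W⁻¹))
    (hUV : 2 * U * V ≤ W - W⁻¹) :
    0 < -4 * U ^ 2 - 4 * V ^ 2 + 4 * U * V * (W - W⁻¹)
        - (W - W⁻¹) * (W - 5 * W⁻¹) + 8 * V ^ 2 * W⁻¹ ^ 2 ∧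
    0 < -4 * V ^ 2 + 4 * U ^ 2 + 4 * U * V * (W - W⁻¹)
        - (W - W⁻¹) * (W + 3 * W⁻¹) := by
  have hWi : 0 < W⁻¹ := inv_pos.2 hW
  have hw : W * W⁻¹ = 1 := mul_inv_cancel₀ hW.ne'
  constructor <;>
    nlinarith [mul_nonneg (sub_nonneg.2 hUV) hWi.le, mul_pos (mul_pos hV hV) (mul_pos hWi hWi),
      sq_nonneg W⁻¹, hw, hU1, mul_pos hU hU]
end

section
/- Let U, V, W > 0 and x, y be defined by U = (√2/2)(x − y), V = (√2/2)(x + y). Then the three conditions (a) 2WV − 3U > 0, (b) 2WU² + 2WV² − UV(W² + 3) = 0, and (c) U² + W²V² + 3U²V² − 2WUV³ − 2WUV ≤ 0, with x > 0, are equivalent to: y = ±√((W−1)(W−3)/((W+1)(W+3)))·x together with x ≥ ((W+1)/(2W))·√((W−1)(W+3)/2), assuming W > 3. -/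
set_option maxHeartbeats 4000000 in
theorem stmt11 (U V W x y : ℝ) (hU : 0 < U) (hV : 0 < V) (hW3 : 3 < W)
    (hUx : U = Real.sqrt 2 / 2 * (x - y)) (hVx : V = Real.sqrt 2 / 2 * (x + y)) :
    (2 * W * V - 3 * U > 0 ∧
     2 * W * U ^ 2 + 2 * W * V ^ 2 - U * V * (W ^ 2 + 3) = 0 ∧
     U ^ 2 + W ^ 2 * V ^ 2 + 3 * U ^ 2 * V ^ 2 - 2 * W * U * V ^ 3 - 2 * W * U * V ≤ 0 ∧
     0 < x) ↔
    ((y = Real.sqrt ((W - 1) * (W - 3) / ((W + 1) * (W + 3))) * x ∨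
      y = -Real.sqrt ((W - 1) * (W - 3) / ((W + 1) * (W + 3))) * x) ∧
     (W + 1) / (2 * W) * Real.sqrt ((W - 1) * (W + 3) / 2) ≤ x) := by
  have h2 : Real.sqrt 2 ^ 2 = 2 := Real.sq_sqrt (by norm_num)
  have hs : 0 < Real.sqrt 2 := Real.sqrt_pos.mpr (by norm_num)
  have hxy1 : 0 < x - y := by
    rw [hUx] at hU; nlinarith [hU, hs]
  have hxy2 : 0 < x + y := by
    rw [hVx] at hV; nlinarith [hV, hs]
  have hx : 0 < x := by linarith
  have hD : (0:ℝ) < (W + 1) * (W + 3) := by nlinarith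
  have hDne : (W + 1) * (W + 3) ≠ 0 := ne_of_gt hD
  have h1ne : W + 1 ≠ 0 := by linarith
  have h3ne : W + 3 ≠ 0 := by linarith
  have hW0 : (0:ℝ) < W := by linarith
  have keyb : 2 * W * U ^ 2 + 2 * W * V ^ 2 - U * V * (W ^ 2 + 3)
      = ((W + 1) * (W + 3) * y ^ 2 - (W - 1) * (W - 3) * x ^ 2) / 2 := by
    rw [hUx, hVx]
    linear_combination ((2 * W * ((x - y) ^ 2 + (x + y) ^ 2) - (x - y) * (x + y) * (W ^ 2 + 3)) / 4) * h2
  have keyc : U ^ 2 + W ^ 2 * V ^ 2 + 3 * U ^ 2 * V ^ 2 - 2 * W * U * V ^ 3 - 2 * W * U * V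
      = (x - y) ^ 2 / 2 + W ^ 2 * (x + y) ^ 2 / 2 + 3 / 4 * ((x - y) * (x + y)) ^ 2
        - W / 2 * (x - y) * (x + y) ^ 3 - W * (x - y) * (x + y) := by
    rw [hUx, hVx]
    linear_combination ((x - y) ^ 2 / 4 + W ^ 2 * (x + y) ^ 2 / 4
      + (3 * (x - y) ^ 2 * (x + y) ^ 2 - 2 * W * (x - y) * (x + y) ^ 3) * (Real.sqrt 2 ^ 2 + 2) / 16
      - W * (x - y) * (x + y) / 2) * h2
  have keya : 2 * W * V - 3 * U = Real.sqrt 2 / 2 * (2 * W * (x + y) - 3 * (x - y)) := by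
    rw [hUx, hVx]; ring
  have hknn : 0 ≤ (W - 1) * (W - 3) / ((W + 1) * (W + 3)) := by
    apply div_nonneg <;> nlinarith
  have hr2 : Real.sqrt ((W - 1) * (W - 3) / ((W + 1) * (W + 3))) ^ 2
      = (W - 1) * (W - 3) / ((W + 1) * (W + 3)) := Real.sq_sqrt hknn
  have hm2 : Real.sqrt ((W - 1) * (W + 3) / 2) ^ 2 = (W - 1) * (W + 3) / 2 :=
    Real.sq_sqrt (by nlinarith)
  have hmnn : 0 ≤ Real.sqrt ((W - 1) * (W + 3) / 2) := Real.sqrt_nonneg _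
  have hTnn : 0 ≤ (W + 1) / (2 * W) * Real.sqrt ((W - 1) * (W + 3) / 2) := by positivity
  constructor
  · rintro ⟨ha, hb, hc, -⟩
    rw [keyb] at hb
    have hR : (W + 1) * (W + 3) * y ^ 2 = (W - 1) * (W - 3) * x ^ 2 := by linarith
    constructor
    · have hk : y ^ 2 = (W - 1) * (W - 3) / ((W + 1) * (W + 3)) * x ^ 2 := by
        field_simp
        linear_combination hR
      have hfac : (y - Real.sqrt ((W - 1) * (W - 3) / ((W + 1) * (W + 3))) * x)
          * (y + Real.sqrt ((W - 1) * (W - 3) / ((W + 1) * (W + 3))) * x) = 0 := by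
        linear_combination hk - x ^ 2 * hr2
      rcases mul_eq_zero.mp hfac with h | h
      · left; linarith
      · right; linarith
    · rw [keyc] at hc
      -- F > 0
      have hab : ((W ^ 2 - 3) * x + (W + 1) * (W + 3) * y) * ((W ^ 2 - 3) * x - (W + 1) * (W + 3) * y)
          = 4 * W ^ 2 * x ^ 2 := by
        linear_combination (-((W + 1) * (W + 3))) * hR
      have hF : 0 < (W ^ 2 - 3) * x + (W + 1) * (W + 3) * y := by
        by_contra h
        push_neg at h
        have hW2 : 0 < (W ^ 2 - 3) * x := mul_pos (by nlinarith) hx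
        have hb0 : 0 < (W ^ 2 - 3) * x - (W + 1) * (W + 3) * y := by linarith
        have hp : 0 < 4 * W ^ 2 * x ^ 2 := by positivity
        linarith [mul_nonpos_of_nonpos_of_nonneg h hb0.le, hab, hp]
      have hid : ((W + 1) * (W + 3)) ^ 2 * ((x - y) ^ 2 / 2 + W ^ 2 * (x + y) ^ 2 / 2
            + 3 / 4 * ((x - y) * (x + y)) ^ 2 - W / 2 * (x - y) * (x + y) ^ 3 - W * (x - y) * (x + y))
          = ((W ^ 2 - 1) * ((W + 1) * (W + 3)) - 8 * W ^ 2 * x ^ 2)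
            * (x * ((W ^ 2 - 3) * x + (W + 1) * (W + 3) * y)) := by
        linear_combination (3 / 2 + 5 * W + 6 * W ^ 2 + 3 * W ^ 3 + W ^ 4 / 2
          + (9 / 4 + 9 * W / 2 + 11 * W ^ 2 / 4 + W ^ 3 / 2) * y ^ 2
          + (3 * W + 4 * W ^ 2 + W ^ 3) * (x * y)
          + (W ^ 3 / 2 - 9 / 4 - 15 * W / 2 - 11 * W ^ 2 / 4) * x ^ 2) * hR
      have hDE : ((W + 1) * (W + 3)) ^ 2 * ((x - y) ^ 2 / 2 + W ^ 2 * (x + y) ^ 2 / 2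
            + 3 / 4 * ((x - y) * (x + y)) ^ 2 - W / 2 * (x - y) * (x + y) ^ 3 - W * (x - y) * (x + y)) ≤ 0 :=
        mul_nonpos_of_nonneg_of_nonpos (by positivity) hc
      have h8 : (W ^ 2 - 1) * ((W + 1) * (W + 3)) ≤ 8 * W ^ 2 * x ^ 2 := by
        nlinarith [mul_pos hx hF, hDE, hid]
      -- conclude T ≤ x
      have hcancel : 8 * W ^ 2 * ((W + 1) / (2 * W) * Real.sqrt ((W - 1) * (W + 3) / 2)) ^ 2
          = (W + 1) ^ 2 * ((W - 1) * (W + 3)) := by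
        rw [mul_pow, div_pow, hm2]
        field_simp
        ring
      have hxT2 : ((W + 1) / (2 * W) * Real.sqrt ((W - 1) * (W + 3) / 2)) ^ 2 ≤ x ^ 2 := by
        nlinarith [h8, hcancel, show (0:ℝ) < 8 * W ^ 2 by positivity]
      nlinarith [hxT2, hTnn, hx]
  · rintro ⟨hy, hT⟩
    have hR : (W + 1) * (W + 3) * y ^ 2 = (W - 1) * (W - 3) * x ^ 2 := by
      have hk' : (W - 1) * (W - 3) / ((W + 1) * (W + 3)) * ((W + 1) * (W + 3)) = (W - 1) * (W - 3) := by
        field_simp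
      rcases hy with h | h <;> rw [h] <;>
        linear_combination ((W + 1) * (W + 3) * x ^ 2) * hr2 + x ^ 2 * hk'
    refine ⟨?_, ?_, ?_, hx⟩
    · -- condition (a)
      rw [keya]
      have hab : ((2 * W - 3) * x + (2 * W + 3) * y) * (((W + 1) * (W + 3)) * ((2 * W - 3) * x - (2 * W + 3) * y))
          = 8 * W ^ 3 * x ^ 2 := by
        linear_combination (-((2 * W + 3) ^ 2)) * hR
      have hin : 0 < (2 * W - 3) * x + (2 * W + 3) * y := by
        by_contra h
        push_neg at h
        have hW2 : 0 < (2 * W - 3) * x := mul_pos (by linarith) hx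
        have hb0 : 0 < (W + 1) * (W + 3) * ((2 * W - 3) * x - (2 * W + 3) * y) :=
          mul_pos hD (by linarith)
        have hp : 0 < 8 * W ^ 3 * x ^ 2 := by positivity
        linarith [mul_nonpos_of_nonpos_of_nonneg h hb0.le, hab, hp]
      have : 0 < 2 * W * (x + y) - 3 * (x - y) := by nlinarith
      positivity
    · rw [keyb]; linarith
    · rw [keyc]
      have hab : ((W ^ 2 - 3) * x + (W + 1) * (W + 3) * y) * ((W ^ 2 - 3) * x - (W + 1) * (W + 3) * y)
          = 4 * W ^ 2 * x ^ 2 := by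
        linear_combination (-((W + 1) * (W + 3))) * hR
      have hF : 0 < (W ^ 2 - 3) * x + (W + 1) * (W + 3) * y := by
        by_contra h
        push_neg at h
        have hW2 : 0 < (W ^ 2 - 3) * x := mul_pos (by nlinarith) hx
        have hb0 : 0 < (W ^ 2 - 3) * x - (W + 1) * (W + 3) * y := by linarith
        have hp : 0 < 4 * W ^ 2 * x ^ 2 := by positivity
        linarith [mul_nonpos_of_nonpos_of_nonneg h hb0.le, hab, hp]
      have hx2 : ((W + 1) / (2 * W) * Real.sqrt ((W - 1) * (W + 3) / 2)) ^ 2 ≤ x ^ 2 := by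
        nlinarith [hT, hTnn]
      have hcancel : 8 * W ^ 2 * ((W + 1) / (2 * W) * Real.sqrt ((W - 1) * (W + 3) / 2)) ^ 2
          = (W + 1) ^ 2 * ((W - 1) * (W + 3)) := by
        rw [mul_pow, div_pow, hm2]
        field_simp
        ring
      have h8 : (W ^ 2 - 1) * ((W + 1) * (W + 3)) ≤ 8 * W ^ 2 * x ^ 2 := by
        nlinarith [mul_le_mul_of_nonneg_left hx2 (by positivity : (0:ℝ) ≤ 8 * W ^ 2), hcancel]
      have hid : ((W + 1) * (W + 3)) ^ 2 * ((x - y) ^ 2 / 2 + W ^ 2 * (x + y) ^ 2 / 2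
            + 3 / 4 * ((x - y) * (x + y)) ^ 2 - W / 2 * (x - y) * (x + y) ^ 3 - W * (x - y) * (x + y))
          = ((W ^ 2 - 1) * ((W + 1) * (W + 3)) - 8 * W ^ 2 * x ^ 2)
            * (x * ((W ^ 2 - 3) * x + (W + 1) * (W + 3) * y)) := by
        linear_combination (3 / 2 + 5 * W + 6 * W ^ 2 + 3 * W ^ 3 + W ^ 4 / 2
          + (9 / 4 + 9 * W / 2 + 11 * W ^ 2 / 4 + W ^ 3 / 2) * y ^ 2
          + (3 * W + 4 * W ^ 2 + W ^ 3) * (x * y)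
          + (W ^ 3 / 2 - 9 / 4 - 15 * W / 2 - 11 * W ^ 2 / 4) * x ^ 2) * hR
      have hneg : ((W + 1) * (W + 3)) ^ 2 * ((x - y) ^ 2 / 2 + W ^ 2 * (x + y) ^ 2 / 2
            + 3 / 4 * ((x - y) * (x + y)) ^ 2 - W / 2 * (x - y) * (x + y) ^ 3 - W * (x - y) * (x + y)) ≤ 0 := by
        rw [hid]
        exact mul_nonpos_of_nonpos_of_nonneg (by linarith) (mul_pos hx hF).le
      by_contra hcon
      push_neg at hcon
      exact absurd hneg (not_le.mpr (mul_pos (by positivity) hcon))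
end

section
/- Let U, V, W be positive reals with W > 1. If −4V² + 4UV(W + W⁻¹) − (W + W⁻¹)² > 0 (i.e. Γ_{a_c} > 0), 4UV − 2(W + W⁻¹) > 0 (i.e. Δ_{ab_c} > 0), V > 1, and 2UV − 2W⁻¹V² − (W − W⁻¹) < 0, then Γ_{b_c} := −4U² + 4UV(W + W⁻¹) − (W + W⁻¹)² > 0. -/
theorem stmt12 (U V W : ℝ) (hU : 0 < U) (hV : 0 < V) (hW : 1 < W)
    (hΓa : 0 < -4 * V ^ 2 + 4 * U * V * (W + W⁻¹) - (W + W⁻¹) ^ 2)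
    (hΔab : 0 < 4 * U * V - 2 * (W + W⁻¹))
    (hV1 : 1 < V)
    (h : 2 * U * V - 2 * W⁻¹ * V ^ 2 - (W - W⁻¹) < 0) :
    0 < -4 * U ^ 2 + 4 * U * V * (W + W⁻¹) - (W + W⁻¹) ^ 2 := by
  have hW0 : (0:ℝ) < W := by linarith
  have hWne : W ≠ 0 := ne_of_gt hW0
  have hVne : V ≠ 0 := ne_of_gt hV
  have e : W * W⁻¹ = 1 := mul_inv_cancel₀ hWne
  -- x = 2UVW bounds
  have ha : 0 < 2*U*V*W - (W^2+1) := by nlinarith [mul_pos hΔab hW0, e]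
  have hb : 2*U*V*W < 2*V^2 + W^2 - 1 := by
    have h2 : 0 < (-(2 * U * V - 2 * W⁻¹ * V ^ 2 - (W - W⁻¹))) * W :=
      mul_pos (by linarith) hW0
    nlinarith [h2, e]
  have hc : 0 < V^2*(W^2+1) - 2*U*V*W := by
    nlinarith [mul_pos (show (0:ℝ) < V^2-1 by nlinarith) (show (0:ℝ) < W^2-1 by nlinarith)]
  have key : 0 < (2*U*V*W - (W^2+1)) * (V^2*(W^2+1) - 2*U*V*W) := mul_pos ha hc
  have hG : 0 < -4*U^2*W^2*V^2 + 4*U*V*W*(W^2+1)*V^2 - (W^2+1)^2*V^2 := by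
    nlinarith [key, mul_pos (mul_pos (mul_pos (mul_pos hU hV) hW0)
      (show (0:ℝ) < W^2+1 by positivity)) (show (0:ℝ) < V^2-1 by nlinarith)]
  have hEq : -4 * U ^ 2 + 4 * U * V * (W + W⁻¹) - (W + W⁻¹) ^ 2
      = (-4*U^2*W^2*V^2 + 4*U*V*W*(W^2+1)*V^2 - (W^2+1)^2*V^2) / (W^2*V^2) := by
    field_simp
  rw [hEq]
  positivity
end

section
/- Let U, V, W > 0 with W > 1, and suppose Γ_{a_c} := −4V² + 4UV(W + W⁻¹) − (W + W⁻¹)² > 0, Γ_{b_c} := −4U² + 4UV(W + W⁻¹) − (W + W⁻¹)² > 0, Δ_{ab_c} := 4UV − 2(W + W⁻¹) > 0, and 2UV − 2W⁻¹V² − (W − W⁻¹) ≥ 0, together with ℝ_c := −4U² − 4V² + 4UV(W + W⁻¹) − (W − W⁻¹)² < 0. Then 2UV − 2W⁻¹U² − (W − W⁻¹) < 0. -/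
theorem stmt13 (U V W : ℝ) (hU : 0 < U) (hV : 0 < V) (hW : 1 < W)
    (hΓa : 0 < -4 * V ^ 2 + 4 * U * V * (W + W⁻¹) - (W + W⁻¹) ^ 2)
    (hΓb : 0 < -4 * U ^ 2 + 4 * U * V * (W + W⁻¹) - (W + W⁻¹) ^ 2)
    (hΔab : 0 < 4 * U * V - 2 * (W + W⁻¹))
    (h : 0 ≤ 2 * U * V - 2 * W⁻¹ * V ^ 2 - (W - W⁻¹))
    (hRc : -4 * U ^ 2 - 4 * V ^ 2 + 4 * U * V * (W + W⁻¹) - (W - W⁻¹) ^ 2 < 0) :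
    2 * U * V - 2 * W⁻¹ * U ^ 2 - (W - W⁻¹) < 0 := by
  by_contra hA
  push_neg at hA
  have hW0 : (0:ℝ) < W := lt_trans one_pos hW
  have hWne : W ≠ 0 := ne_of_gt hW0
  set m : ℝ := W ^ 2 - 1 with hm_def
  set x : ℝ := V * W - U with hx_def
  set y : ℝ := U * W - V with hy_def
  clear_value m x y
  have hm : 0 < m := by
    have h1 : 1 < W ^ 2 := by nlinarith
    rw [hm_def]
    linarith
  -- clear denominators
  have hA' : m ≤ 2 * U * x := by
    have hid : 2 * U * x - m = W * (2 * U * V - 2 * W⁻¹ * U ^ 2 - (W - W⁻¹)) := by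
      rw [hm_def, hx_def]
      field_simp
    linarith [hid, mul_nonneg (le_of_lt hW0) hA]
  have hB' : m ≤ 2 * V * y := by
    have hid : 2 * V * y - m = W * (2 * U * V - 2 * W⁻¹ * V ^ 2 - (W - W⁻¹)) := by
      rw [hm_def, hy_def]
      field_simp
    linarith [hid, mul_nonneg (le_of_lt hW0) h]
  have hR' : 4 * W * x * y < m ^ 2 := by
    have hid : m ^ 2 - 4 * W * x * y
        = -(W ^ 2 * (-4 * U ^ 2 - 4 * V ^ 2 + 4 * U * V * (W + W⁻¹) - (W - W⁻¹) ^ 2)) := by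
      rw [hm_def, hx_def, hy_def]
      field_simp
      ring
    linarith [hid, mul_neg_of_pos_of_neg (pow_pos hW0 2) hRc]
  have hx : 0 < x := by nlinarith
  have hy : 0 < y := by nlinarith
  have hUm : U * m = y * W + x := by rw [hm_def, hx_def, hy_def]; ring
  have hVm : V * m = x * W + y := by rw [hm_def, hx_def, hy_def]; ring
  have h1 : m ^ 2 ≤ 2 * x * (y * W + x) := by
    calc m ^ 2 = m * m := by ring
      _ ≤ (2 * U * x) * m := mul_le_mul_of_nonneg_right hA' hm.le
      _ = 2 * x * (y * W + x) := by rw [← hUm]; ring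
  have h2 : m ^ 2 ≤ 2 * y * (x * W + y) := by
    calc m ^ 2 = m * m := by ring
      _ ≤ (2 * V * y) * m := mul_le_mul_of_nonneg_right hB' hm.le
      _ = 2 * y * (x * W + y) := by rw [← hVm]; ring
  have hx2 : W * x * y < x ^ 2 := by linarith [h1, hR']
  have hy2 : W * x * y < y ^ 2 := by linarith [h2, hR']
  have hx3 : W * y < x := by
    have : x * (W * y) < x * x := by linarith [hx2]
    have := lt_of_mul_lt_mul_left this (le_of_lt hx)
    linarith
  have hy3 : W * x < y := by
    have : y * (W * x) < y * y := by linarith [hy2]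
    have := lt_of_mul_lt_mul_left this (le_of_lt hy)
    linarith
  have hWWx : W * (W * x) < W * y := mul_lt_mul_of_pos_left hy3 hW0
  have hfin : W ^ 2 * x < x := by calc W ^ 2 * x = W * (W * x) := by ring
    _ < W * y := hWWx
    _ < x := hx3
  nlinarith [hfin, hm, hx]
end

section
/- Let U, V, W > 0 with Γ_{a_c} := −4V² + 4UV(W + W⁻¹) − (W + W⁻¹)² < 0, Γ_{b_c} := −4U² + 4UV(W + W⁻¹) − (W + W⁻¹)² < 0, and U ≥ 1. Then Δ_{ab_c} := 4UV − 2(W + W⁻¹) < 0. -/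
theorem stmt14 (U V W : ℝ) (hU : 0 < U) (hV : 0 < V) (hW : 0 < W)
    (hΓa : -4 * V ^ 2 + 4 * U * V * (W + W⁻¹) - (W + W⁻¹) ^ 2 < 0)
    (hΓb : -4 * U ^ 2 + 4 * U * V * (W + W⁻¹) - (W + W⁻¹) ^ 2 < 0)
    (hU1 : 1 ≤ U) :
    4 * U * V - 2 * (W + W⁻¹) < 0 := by
  by_contra h
  push_neg at h
  set s := W + W⁻¹ with hs
  have hs2 : 2 ≤ s := by
    rw [hs]
    nlinarith [sq_nonneg (W - 1), mul_pos hW (inv_pos.mpr hW), mul_inv_cancel₀ (ne_of_gt hW)]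
  -- s ≤ 2UV
  have h1 : s * s ≤ 2 * U * V * s := by nlinarith
  have hsV : s < 2 * V := by nlinarith
  have hsU : s < 2 * U := by nlinarith
  nlinarith [mul_pos hU hV, sq_nonneg (s - 2), mul_nonneg (sub_nonneg.mpr hs2) (le_of_lt (add_pos hU hV))]
end

section
/- Let U, V, W > 0 with Γ_{a_c} := −4V² + 4UV(W + W⁻¹) − (W + W⁻¹)² > 0, Γ_{b_c} := −4U² + 4UV(W + W⁻¹) − (W + W⁻¹)² > 0, Δ_{ab_c} := 4UV − 2(W + W⁻¹) ≤ 0, and ℝ_c := −4U² − 4V² + 4UV(W + W⁻¹) − (W − W⁻¹)² < 0. Then −(W + W⁻¹)³ + 4UV(W + W⁻¹)² − 4(U² + V²)(W + W⁻¹) + 8UV < 0, i.e., the quantity corresponding to 𝕄ℝ + 2a₀a₂b₀b₂Δ_ab is negative. -/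
theorem stmt15 (U V W : ℝ) (hU : 0 < U) (hV : 0 < V) (hW : 0 < W)
    (hΓa : 0 < -4 * V ^ 2 + 4 * U * V * (W + W⁻¹) - (W + W⁻¹) ^ 2)
    (hΓb : 0 < -4 * U ^ 2 + 4 * U * V * (W + W⁻¹) - (W + W⁻¹) ^ 2)
    (hΔab : 4 * U * V - 2 * (W + W⁻¹) ≤ 0)
    (hRc : -4 * U ^ 2 - 4 * V ^ 2 + 4 * U * V * (W + W⁻¹) - (W - W⁻¹) ^ 2 < 0) :
    -(W + W⁻¹) ^ 3 + 4 * U * V * (W + W⁻¹) ^ 2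
      - 4 * (U ^ 2 + V ^ 2) * (W + W⁻¹) + 8 * U * V < 0 := by
  have hW' : W * W⁻¹ = 1 := mul_inv_cancel₀ hW.ne'
  have hs : 0 < W + W⁻¹ := by positivity
  nlinarith [mul_neg_of_pos_of_neg hs hRc, hΔab, hW', sq_nonneg (W - W⁻¹)]
end

section
/- Let a₂,a₁,a₀,b₂,b₁,b₀ > 0 with the usual notations and suppose ℝ > 0 (hence 𝔸ℂ > 0). If χ₁ := b₀b₁b₂R + (a₀b₁b₂ − b₀ℂ) and χ₂ := (a₁a₂b₀ + a₀ℂ)R + a₀a₁a₂ for some R > 0, then a₀a₂χ₁ + b₀b₂χ₂ = (a₁b₀b₂R + a₀a₂b₁)𝕄 > 0; consequently χ₁ and χ₂ cannot both be negative. -/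
theorem stmt16 (a₂ a₁ a₀ b₂ b₁ b₀ R : ℝ)
    (ha₂ : 0 < a₂) (ha₁ : 0 < a₁) (ha₀ : 0 < a₀)
    (hb₂ : 0 < b₂) (hb₁ : 0 < b₁) (hb₀ : 0 < b₀) (hRpos : 0 < R)
    (C M Rr χ₁ χ₂ : ℝ)
    (hC : C = a₁ * b₂ - a₂ * b₁) (hM : M = a₀ * b₂ + a₂ * b₀)
    (hRr : Rr = (a₀ * b₁ - a₁ * b₀) * C - (a₀ * b₂ - a₂ * b₀) ^ 2)
    (hRrpos : 0 < Rr)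
    (hχ₁ : χ₁ = b₀ * b₁ * b₂ * R + (a₀ * b₁ * b₂ - b₀ * C))
    (hχ₂ : χ₂ = (a₁ * a₂ * b₀ + a₀ * C) * R + a₀ * a₁ * a₂) :
    a₀ * a₂ * χ₁ + b₀ * b₂ * χ₂ = (a₁ * b₀ * b₂ * R + a₀ * a₂ * b₁) * M ∧
    0 < (a₁ * b₀ * b₂ * R + a₀ * a₂ * b₁) * M ∧
    ¬(χ₁ < 0 ∧ χ₂ < 0) := by
  have heq : a₀ * a₂ * χ₁ + b₀ * b₂ * χ₂ = (a₁ * b₀ * b₂ * R + a₀ * a₂ * b₁) * M := by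
    subst hC hM hχ₁ hχ₂; ring
  have hpos : 0 < (a₁ * b₀ * b₂ * R + a₀ * a₂ * b₁) * M := by
    subst hM; positivity
  refine ⟨heq, hpos, ?_⟩
  rintro ⟨h1, h2⟩
  nlinarith [mul_pos ha₀ ha₂, mul_pos hb₀ hb₂, heq, hpos]
end

section
/- Let U, V, W > 0 with V > 1 and W > 1, and suppose W + W⁻¹ < 2UV < (W − W⁻¹) + 2V²W⁻¹. Then −4U² + 4UV(W + W⁻¹) − (W + W⁻¹)² > 0. Equivalently, the factorization −V⁻²(2UV − V(V − √(V²−1))(W+W⁻¹))(2UV − V(V + √(V²−1))(W+W⁻¹)) is positive. -/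
/-! As a quadratic in `t = 2UV`, the expression `-4U² + 4UVs - s²` (with `s = W + W⁻¹`) equals
`-V⁻²(t - r₋ s)(t - r₊ s)` with roots `r± = V(V ± √(V² - 1))`, so it is positive exactly when
`r₋ s < t < r₊ s`. Since `r₋ = V / (V + √(V² - 1)) < 1`, the lower bound `s < t` suffices on one side;
on the other, `r₊ s - (W - W⁻¹ + 2V²W⁻¹) = (V² - 1 + V√(V² - 1)) W + √(V² - 1)(V - √(V² - 1)) W⁻¹ > 0`. -/

open Real

theorem sqrt_sq_sub_one_lt_self {V : ℝ} (hV : 0 < V) : √(V ^ 2 - 1) < V :=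
  (Real.sqrt_lt' hV).2 (by linarith)

theorem mul_sub_sqrt_sq_sub_one_lt_one {V : ℝ} (hV : 1 < V) : V * (V - √(V ^ 2 - 1)) < 1 := by
  have hr : √(V ^ 2 - 1) ^ 2 = V ^ 2 - 1 := Real.sq_sqrt (by nlinarith)
  have hr_pos : 0 < √(V ^ 2 - 1) := Real.sqrt_pos.2 (by nlinarith)
  have hr_lt := sqrt_sq_sub_one_lt_self (zero_lt_one.trans hV)
  nlinarith [mul_lt_mul_of_pos_right hr_lt hr_pos]

theorem sub_inv_add_two_mul_sq_mul_inv_lt {V W : ℝ} (hV : 1 < V) (hW : 0 < W) :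
    W - W⁻¹ + 2 * V ^ 2 * W⁻¹ < V * (V + √(V ^ 2 - 1)) * (W + W⁻¹) := by
  have hr : √(V ^ 2 - 1) ^ 2 = V ^ 2 - 1 := Real.sq_sqrt (by nlinarith)
  have hr_pos : 0 < √(V ^ 2 - 1) := Real.sqrt_pos.2 (by nlinarith)
  have hr_lt := sqrt_sq_sub_one_lt_self (zero_lt_one.trans hV)
  have hWinv : 0 < W⁻¹ := inv_pos.2 hW
  have hcoeff_W : 0 < V ^ 2 - 1 + V * √(V ^ 2 - 1) :=
    add_pos (by nlinarith) (mul_pos (zero_lt_one.trans hV) hr_pos)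
  have hcoeff_Winv : 0 < √(V ^ 2 - 1) * (V - √(V ^ 2 - 1)) :=
    mul_pos hr_pos (sub_pos.2 hr_lt)
  have hdiff : V * (V + √(V ^ 2 - 1)) * (W + W⁻¹) - (W - W⁻¹ + 2 * V ^ 2 * W⁻¹)
      = (V ^ 2 - 1 + V * √(V ^ 2 - 1)) * W + √(V ^ 2 - 1) * (V - √(V ^ 2 - 1)) * W⁻¹ := by
    linear_combination W⁻¹ * hr
  nlinarith [mul_pos hcoeff_W hW, mul_pos hcoeff_Winv hWinv]

theorem neg_inv_sq_mul_sub_mul_sub_eq {U V : ℝ} (s : ℝ) (hV : 1 ≤ V ^ 2) :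
    -(V ^ 2)⁻¹ * (2 * U * V - V * (V - √(V ^ 2 - 1)) * s) * (2 * U * V - V * (V + √(V ^ 2 - 1)) * s)
      = -4 * U ^ 2 + 4 * U * V * s - s ^ 2 := by
  have hr : √(V ^ 2 - 1) ^ 2 = V ^ 2 - 1 := Real.sq_sqrt (by linarith)
  have hV0 : V ≠ 0 := by rintro rfl; norm_num at hV
  field_simp
  linear_combination s ^ 2 * hr

theorem stmt18_general (U V W : ℝ) (hV : 1 < V) (hW : 1 < W)
    (h1 : W + W⁻¹ < 2 * U * V)
    (h2 : 2 * U * V < (W - W⁻¹) + 2 * V ^ 2 * W⁻¹) :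
    0 < -4 * U ^ 2 + 4 * U * V * (W + W⁻¹) - (W + W⁻¹) ^ 2 ∧
    0 < -(V ^ 2)⁻¹ * (2 * U * V - V * (V - Real.sqrt (V ^ 2 - 1)) * (W + W⁻¹))
        * (2 * U * V - V * (V + Real.sqrt (V ^ 2 - 1)) * (W + W⁻¹)) := by
  have hW0 : 0 < W := zero_lt_one.trans hW
  have hs : 0 < W + W⁻¹ := by positivity
  have hlower : V * (V - √(V ^ 2 - 1)) * (W + W⁻¹) < 2 * U * V := calc
    _ < 1 * (W + W⁻¹) := mul_lt_mul_of_pos_right (mul_sub_sqrt_sq_sub_one_lt_one hV) hs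
    _ < 2 * U * V := by linarith
  have hupper : 2 * U * V < V * (V + √(V ^ 2 - 1)) * (W + W⁻¹) :=
    h2.trans (sub_inv_add_two_mul_sq_mul_inv_lt hV hW0)
  have hprod : 0 < -(V ^ 2)⁻¹ * (2 * U * V - V * (V - √(V ^ 2 - 1)) * (W + W⁻¹))
      * (2 * U * V - V * (V + √(V ^ 2 - 1)) * (W + W⁻¹)) := by
    have hneg : -(V ^ 2)⁻¹ < 0 := neg_neg_of_pos (by positivity)
    exact mul_pos_of_neg_of_neg (mul_neg_of_neg_of_pos hneg (sub_pos.2 hlower)) (sub_neg.2 hupper)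
  have hfactor := neg_inv_sq_mul_sub_mul_sub_eq (U := U) (W + W⁻¹) (one_le_pow₀ hV.le)
  exact ⟨hfactor ▸ hprod, hprod⟩

theorem stmt18 (U V W : ℝ) (hU : 0 < U) (hV : 1 < V) (hW : 1 < W)
    (h1 : W + W⁻¹ < 2 * U * V)
    (h2 : 2 * U * V < (W - W⁻¹) + 2 * V ^ 2 * W⁻¹) :
    0 < -4 * U ^ 2 + 4 * U * V * (W + W⁻¹) - (W + W⁻¹) ^ 2 ∧
    0 < -(V ^ 2)⁻¹ * (2 * U * V - V * (V - Real.sqrt (V ^ 2 - 1)) * (W + W⁻¹))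
        * (2 * U * V - V * (V + Real.sqrt (V ^ 2 - 1)) * (W + W⁻¹)) :=
  stmt18_general U V W hV hW h1 h2
end
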